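/- arXiv:1910.00426 — 2 statements merged into one kernel-verified Lean document; each statement's English description precedes it below -/
import Mathlib

section
/- Let G be an abelian semigroup of continuous self-maps of a metric space (X,d). Then the chain recurrent set CR(G) is invariant under G: for every chain recurrent point x and every g ∈ G, the point g(x) is chain recurrent. -/
/-- `Ghat G` is the set `Ĝ = G ∪ {id}`. -/
def Ghat {X : Type*} (G : Set (X → X)) : Set (X → X) := insert id G

/-- An `(ε, g)`-chain from `a` to `b`: a finite sequence
`(a = x₀, …, xₙ = b; g₀, …, g_{n-1})`, `n ≥ 1`, with each `gᵢ ∈ Ĝ` and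
`d(gᵢ(g(xᵢ)), x_{i+1}) < ε` for every `i < n`. -/
def EpsChain {X : Type*} [MetricSpace X] (G : Set (X → X)) (ε : ℝ)
    (g : X → X) (a b : X) : Prop :=
  ∃ n : ℕ, 0 < n ∧ ∃ x : ℕ → X, ∃ gs : ℕ → X → X,
    x 0 = a ∧ x n = b ∧ (∀ i < n, gs i ∈ Ghat G) ∧
    ∀ i < n, dist (gs i (g (x i))) (x (i + 1)) < ε

/-- `x` is a chain recurrent point for `G`: for every `ε > 0` and `g ∈ G`
there is an `(ε, g)`-chain from `x` to itself. -/
def ChainRecurrentPt {X : Type*} [MetricSpace X] (G : Set (X → X)) (x : X) : Prop :=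
  ∀ ε > (0 : ℝ), ∀ g ∈ G, EpsChain G ε g x x

/-- `a` and `b` are chain equivalent for `G`: for every `ε > 0` and `g ∈ G`
there are `(ε, g)`-chains from `a` to `b` and from `b` to `a`. -/
def ChainEquivPts {X : Type*} [MetricSpace X] (G : Set (X → X)) (a b : X) : Prop :=
  ∀ ε > (0 : ℝ), ∀ g ∈ G, EpsChain G ε g a b ∧ EpsChain G ε g b a

/-- `C` is a chain component of `G`: an equivalence class of the chain
equivalence relation on the chain recurrent set. -/
def IsChainComponent {X : Type*} [MetricSpace X] (G : Set (X → X)) (C : Set X) : Prop :=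
  ∃ x : X, ChainRecurrentPt G x ∧
    C = {y | ChainRecurrentPt G y ∧ ChainEquivPts G x y}


section Chains

variable {X : Type*} {G : Set (X → X)}

lemma subset_Ghat : G ⊆ Ghat G := Set.subset_insert _ _

lemma comp_mem_Ghat (hcomp : ∀ f ∈ G, ∀ g ∈ G, f ∘ g ∈ G)
    {u v : X → X} (hu : u ∈ Ghat G) (hv : v ∈ Ghat G) : u ∘ v ∈ Ghat G := by
  rcases hu with rfl | hu
  · exact hv
  rcases hv with rfl | hv
  · exact subset_Ghat hu
  · exact subset_Ghat (hcomp u hu v hv)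

variable [MetricSpace X] {ε δ : ℝ} {g h : X → X} {a b : X}

lemma EpsChain.map_end (hcomp : ∀ f ∈ G, ∀ g ∈ G, f ∘ g ∈ G) (hg : g ∈ G)
    (hδε : δ ≤ ε) (hgb : ∀ y, dist y b < δ → dist (g y) (g b) < ε)
    (hchain : EpsChain G δ h a b) : EpsChain G ε h a (g b) := by
  obtain ⟨n, hn, x, gs, hx0, hxn, hgs, hdist⟩ := hchain
  refine ⟨n, hn, fun i => if i = n then g b else x i,
    fun i => if i + 1 = n then g ∘ gs i else gs i, by simp [hn.ne, hx0], by simp, ?_, ?_⟩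
  · intro i hi
    dsimp only
    split_ifs
    · exact comp_mem_Ghat hcomp (subset_Ghat hg) (hgs i hi)
    · exact hgs i hi
  · intro i hi
    have hstep := hdist i hi
    simp only [hi.ne, if_false]
    split_ifs with hlast
    · rw [hlast, hxn] at hstep
      exact hgb _ hstep
    · exact hstep.trans_le hδε

/-- Start at `g a` and precompose every map but the first with `g`:
`gᵢ (h (g xᵢ)) = (gᵢ ∘ g) (h xᵢ)` by commutativity. -/
lemma EpsChain.comp_start (hcomp : ∀ f ∈ G, ∀ g ∈ G, f ∘ g ∈ G) (hg : g ∈ G)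
    (hcomm : h ∘ g = g ∘ h) (hchain : EpsChain G ε (h ∘ g) a b) :
    EpsChain G ε h (g a) b := by
  obtain ⟨n, hn, x, gs, hx0, hxn, hgs, hdist⟩ := hchain
  refine ⟨n, hn, fun i => if i = 0 then g a else x i,
    fun i => if i = 0 then gs i else gs i ∘ g, by simp, by simp [hn.ne', hxn], ?_, ?_⟩
  · intro i hi
    dsimp only
    split_ifs
    · exact hgs i hi
    · exact comp_mem_Ghat hcomp (hgs i hi) (subset_Ghat hg)
  · intro i hi
    have hstep := hdist i hi
    simp only [Nat.succ_ne_zero, if_false]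
    split_ifs with hfirst
    · subst hfirst
      simpa [hx0] using hstep
    · have hswap : h (g (x i)) = g (h (x i)) := congrFun hcomm (x i)
      simpa [hfirst, hswap] using hstep

end Chains

/-- For an abelian semigroup `G` of continuous self-maps of a metric space,
the chain recurrent set `CR(G)` is invariant under `G`. -/
theorem chainRecurrentSet_invariant {X : Type*} [MetricSpace X]
    (G : Set (X → X)) (hcont : ∀ g ∈ G, Continuous g)
    (hcomp : ∀ f ∈ G, ∀ g ∈ G, f ∘ g ∈ G)
    (habel : ∀ f ∈ G, ∀ g ∈ G, f ∘ g = g ∘ f) :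
    ∀ x : X, ChainRecurrentPt G x → ∀ g ∈ G, ChainRecurrentPt G (g x) := by
  intro x hx g hg ε hε h hh
  obtain ⟨δ, hδ, hgx⟩ := Metric.continuous_iff.mp (hcont g hg) x ε hε
  have hchain : EpsChain G (min δ ε) (h ∘ g) x x :=
    hx (min δ ε) (lt_min hδ hε) (h ∘ g) (hcomp h hh g hg)
  exact (hchain.map_end hcomp hg (min_le_right δ ε)
    fun y hy => hgx y (hy.trans_le (min_le_left δ ε))).comp_start hcomp hg (habel h hh g hg)
end

section
/- Let G be a semigroup of continuous self-maps of a metric space (X,d). Then every chain component of G is a closed subset of X; that is, if a is a limit point of a chain component C, then a is chain recurrent and a ∈ C. -/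
/-!
An `(ε, g)`-chain is a path of steps `a ↦ b` with `d(f (g a), b) < ε` for some `f ∈ Ĝ`. Let `a` be
a limit of points `y` chain equivalent to `x`. A chain from `x` to a nearby `y` is redirected to
`a` by moving its last point. For chains towards `x`, continuity of `g` only makes `g a` close to
`g y`; so one takes an `(ε, g ∘ g)`-chain `y = z₀, z₁, …, x`, steps `a ↦ g y` first, and reads
each step `f (g (g zᵢ)) ≈ zᵢ₊₁` as a `g`-step from `g y` (for `i = 0`) or from `zᵢ` with the map
`f ∘ g ∈ Ĝ`.
-/

open Relation Topology

theorem Relation.transGen_iff_exists_seq {α : Type*} {r : α → α → Prop} {a b : α} :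
    TransGen r a b ↔
      ∃ n, 0 < n ∧ ∃ x : ℕ → α, x 0 = a ∧ x n = b ∧ ∀ i < n, r (x i) (x (i + 1)) := by
  constructor
  · intro h
    induction h with
    | single hab => exact ⟨1, one_pos, fun i => if i = 0 then a else _, rfl, rfl, by simpa⟩
    | @tail b c _ hbc ih =>
      obtain ⟨n, hn, x, hx0, hxn, hx⟩ := ih
      refine ⟨n + 1, n.succ_pos, fun i => if i ≤ n then x i else c, by simpa, by simp, ?_⟩
      intro i hi
      rcases Nat.lt_succ_iff_lt_or_eq.mp hi with hi | rfl
      · simpa [hi.le, Nat.succ_le_of_lt hi] using hx i hi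
      · simpa [hxn] using hbc
  · rintro ⟨n, hn, x, rfl, rfl, hx⟩
    induction n with
    | zero => exact absurd hn (lt_irrefl 0)
    | succ n ih =>
      rcases n.eq_zero_or_pos with rfl | hn
      · exact .single (hx 0 one_pos)
      · exact .tail (ih hn fun i hi => hx i (hi.trans n.lt_succ_self)) (hx n n.lt_succ_self)

theorem comp_mem_of_mem_ghat {X : Type*} {G : Set (X → X)} {f g : X → X}
    (hcomp : ∀ f ∈ G, ∀ g ∈ G, f ∘ g ∈ G) (hf : f ∈ Ghat G)
    (hg : g ∈ G) : f ∘ g ∈ G := by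
  rcases hf with rfl | hf
  · exact hg
  · exact hcomp f hf g hg

section EpsStep

variable {X : Type*} [MetricSpace X] {G : Set (X → X)} {ε : ℝ} {f g : X → X} {a b c : X}

def EpsStep (G : Set (X → X)) (ε : ℝ) (g : X → X) (a b : X) : Prop :=
  ∃ h ∈ Ghat G, dist (h (g a)) b < ε

theorem epsChain_iff_transGen : EpsChain G ε g a b ↔ TransGen (EpsStep G ε g) a b := by
  rw [transGen_iff_exists_seq]
  constructor
  · rintro ⟨n, hn, x, gs, hx0, hxn, hgs, hdist⟩
    exact ⟨n, hn, x, hx0, hxn, fun i hi => ⟨gs i, hgs i hi, hdist i hi⟩⟩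
  · rintro ⟨n, hn, x, hx0, hxn, hstep⟩
    have : Nonempty (X → X) := ⟨id⟩
    choose! gs hgs hdist using hstep
    exact ⟨n, hn, x, gs, hx0, hxn, hgs, hdist⟩

theorem EpsChain.trans (hab : EpsChain G ε g a b) (hbc : EpsChain G ε g b c) :
    EpsChain G ε g a c :=
  epsChain_iff_transGen.mpr <|
    (epsChain_iff_transGen.mp hab).trans (epsChain_iff_transGen.mp hbc)

theorem epsStep_of_dist_lt (h : dist (g a) b < ε) : EpsStep G ε g a b :=
  ⟨id, Set.mem_insert _ _, h⟩

theorem EpsStep.mono {δ : ℝ} (hεδ : ε ≤ δ) : EpsStep G ε g a b → EpsStep G δ g a b :=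
  fun ⟨h, hh, hdist⟩ => ⟨h, hh, hdist.trans_le hεδ⟩

theorem epsStep_comp_iff : EpsStep G ε (f ∘ g) a b ↔ EpsStep G ε f (g a) b :=
  Iff.rfl

theorem EpsStep.of_comp (hcomp : ∀ f ∈ G, ∀ g ∈ G, f ∘ g ∈ G) (hf : f ∈ G)
    (h : EpsStep G ε (f ∘ g) a b) : EpsStep G ε g a b :=
  let ⟨k, hk, hdist⟩ := h
  ⟨k ∘ f, Set.mem_insert_of_mem _ (comp_mem_of_mem_ghat hcomp hk hf), hdist⟩

theorem transGen_epsStep_of_comp_self (hcomp : ∀ f ∈ G, ∀ g ∈ G, f ∘ g ∈ G) (hg : g ∈ G)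
    (h : TransGen (EpsStep G ε (g ∘ g)) a b) : TransGen (EpsStep G ε g) (g a) b := by
  obtain ⟨c, hac, hcb⟩ := TransGen.head'_iff.mp h
  exact .head' (epsStep_comp_iff.mp hac)
    (ReflTransGen.mono (fun _ _ => EpsStep.of_comp hcomp hg) _ _ hcb)

theorem transGen_epsStep_of_dist_lt {δ : ℝ} (h : TransGen (EpsStep G ε g) a b)
    (hbc : dist b c < δ) : TransGen (EpsStep G (ε + δ) g) a c := by
  have hεδ : ε ≤ ε + δ := le_add_of_nonneg_right (dist_nonneg.trans hbc.le)
  obtain ⟨b', hab', ⟨k, hk, hdist⟩⟩ := TransGen.tail'_iff.mp h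
  refine .tail' (ReflTransGen.mono (fun _ _ => EpsStep.mono hεδ) _ _ hab') ⟨k, hk, ?_⟩
  calc dist (k (g b')) c ≤ dist (k (g b')) b + dist b c := dist_triangle _ _ _
    _ < ε + δ := add_lt_add hdist hbc

end EpsStep

section Closure

variable {X : Type*} [MetricSpace X] {G : Set (X → X)} {ε : ℝ} {g : X → X} {a b : X}

theorem epsChain_to_of_mem_closure (hcomp : ∀ f ∈ G, ∀ g ∈ G, f ∘ g ∈ G)
    (ha : a ∈ closure {y | ∀ ε > (0 : ℝ), ∀ g ∈ G, EpsChain G ε g y b})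
    (hε : 0 < ε) (hg : g ∈ G) (hgc : Continuous g) : EpsChain G ε g a b := by
  have hnear : g ⁻¹' Metric.ball (g a) ε ∈ 𝓝 a :=
    hgc.continuousAt.preimage_mem_nhds (Metric.ball_mem_nhds _ hε)
  obtain ⟨y, hya, hy⟩ := mem_closure_iff_nhds.mp ha _ hnear
  have hyb := epsChain_iff_transGen.mp (hy ε hε (g ∘ g) (hcomp g hg g hg))
  exact epsChain_iff_transGen.mpr <|
    .head (epsStep_of_dist_lt (Metric.mem_ball'.mp hya))
      (transGen_epsStep_of_comp_self hcomp hg hyb)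

theorem epsChain_from_of_mem_closure
    (ha : a ∈ closure {y | ∀ ε > (0 : ℝ), ∀ g ∈ G, EpsChain G ε g b y})
    (hε : 0 < ε) (hg : g ∈ G) : EpsChain G ε g b a := by
  obtain ⟨y, hy, hay⟩ := Metric.mem_closure_iff.mp ha (ε / 2) (half_pos hε)
  have hby := epsChain_iff_transGen.mp (hy (ε / 2) (half_pos hε) g hg)
  have hba := transGen_epsStep_of_dist_lt hby (dist_comm a y ▸ hay)
  rwa [add_halves, ← epsChain_iff_transGen] at hba

end Closure

/-- For a semigroup `G` of continuous self-maps of a metric space, every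
chain component of `G` is a closed subset of `X`. -/
theorem chainComponent_isClosed {X : Type*} [MetricSpace X]
    (G : Set (X → X)) (hcont : ∀ g ∈ G, Continuous g)
    (hcomp : ∀ f ∈ G, ∀ g ∈ G, f ∘ g ∈ G)
    (C : Set X) (hC : IsChainComponent G C) :
    IsClosed C := by
  obtain ⟨x, -, rfl⟩ := hC
  refine closure_subset_iff_isClosed.mp fun a ha => ?_
  have hto : ∀ ε > (0 : ℝ), ∀ g ∈ G, EpsChain G ε g a x := fun ε hε g hg =>
    epsChain_to_of_mem_closure hcomp
      (closure_mono (fun y hy ε hε g hg => (hy.2 ε hε g hg).2) ha) hε hg (hcont g hg)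
  have hfrom : ∀ ε > (0 : ℝ), ∀ g ∈ G, EpsChain G ε g x a := fun ε hε g hg =>
    epsChain_from_of_mem_closure
      (closure_mono (fun y hy ε hε g hg => (hy.2 ε hε g hg).1) ha) hε hg
  exact ⟨fun ε hε g hg => (hto ε hε g hg).trans (hfrom ε hε g hg),
    fun ε hε g hg => ⟨hfrom ε hε g hg, hto ε hε g hg⟩⟩
end
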